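/- arXiv:2504.05713 — 6 statements merged into one kernel-verified Lean document; each statement's English description precedes it below -/
import Mathlib

section
/- Let Q : (0,1) → ℝ be a positive, continuous, strictly increasing quantile function with ∫₀ᵘ Q(p) dp finite for all u ∈ (0,1). Define the poverty gap ratio A₁(u) = u - (1/Q(u)) ∫₀ᵘ Q(p) dp. Then Q is uniquely recovered from A₁ via Q(u) = exp(-∫ᵤ¹ (p - A₁(p))⁻¹ dp) / (u - A₁(u)), provided the integral ∫ᵤ¹ (p - A₁(p))⁻¹ dp converges and the normalization ∫₀¹ Q(p) dp = 1 holds. -/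
/-!
Write `G u = ∫₀ᵘ Q` for the Lorenz-type primitive of `Q`. Clearing the denominator in the
definition of `A₁` gives `u - A₁ u = G u / Q u`, so `(p - A₁ p)⁻¹ = G' p / G p` is the
logarithmic derivative of `G`. Integrating from `u` to `1` and using `G 1 = 1` yields
`G u = exp (-∫ᵤ¹ (p - A₁ p)⁻¹ dp)`, and then `Q u = G u / (u - A₁ u)`.
-/

open MeasureTheory Set

section LogPrimitive

variable {f : ℝ → ℝ} {a b : ℝ}

theorem intervalIntegral_pos_of_pos_on_Ioo (hf : IntervalIntegrable f volume a b)
    (hpos : ∀ x ∈ Ioo a b, 0 < f x) {x : ℝ} (hx : x ∈ Ioc a b) :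
    0 < ∫ t in a..x, f t :=
  intervalIntegral.intervalIntegral_pos_of_pos_on
    (hf.mono_set (uIcc_subset_uIcc_left (Ioc_subset_Icc_self.trans Icc_subset_uIcc hx)))
    (fun t ht => hpos t ⟨ht.1, ht.2.trans_le hx.2⟩) hx.1

theorem hasDerivAt_log_primitive (hf : IntervalIntegrable f volume a b)
    (hcont : ContinuousOn f (Ioo a b)) (hpos : ∀ x ∈ Ioo a b, 0 < f x) {p : ℝ}
    (hp : p ∈ Ioo a b) :
    HasDerivAt (fun x => Real.log (∫ t in a..x, f t)) (f p / ∫ t in a..p, f t) p :=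
  (intervalIntegral.integral_hasDerivAt_right
    (hf.mono_set (uIcc_subset_uIcc_left (Ioo_subset_Icc_self.trans Icc_subset_uIcc hp)))
    (hcont.stronglyMeasurableAtFilter isOpen_Ioo p hp)
    (hcont.continuousAt (isOpen_Ioo.mem_nhds hp))).log
    (intervalIntegral_pos_of_pos_on_Ioo hf hpos (Ioo_subset_Ioc_self hp)).ne'

theorem integral_eq_log_primitive_sub (hf : IntervalIntegrable f volume a b)
    (hcont : ContinuousOn f (Ioo a b)) (hpos : ∀ x ∈ Ioo a b, 0 < f x) {u : ℝ} {g : ℝ → ℝ}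
    (hu : u ∈ Ioo a b) (hg : ∀ p ∈ Ioo u b, g p = f p / ∫ t in a..p, f t)
    (hgi : IntervalIntegrable g volume u b) :
    ∫ p in u..b, g p = Real.log (∫ t in a..b, f t) - Real.log (∫ t in a..u, f t) := by
  have hsub : Icc u b ⊆ Ioc a b := Icc_subset_Ioc hu.1 le_rfl
  refine intervalIntegral.integral_eq_sub_of_hasDeriv_right_of_le
    (f := fun x => Real.log (∫ t in a..x, f t)) hu.2.le ?_ ?_ hgi
  · refine ContinuousOn.log ?_ fun p hp =>
      (intervalIntegral_pos_of_pos_on_Ioo hf hpos (hsub hp)).ne'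
    exact (intervalIntegral.continuousOn_primitive_interval' hf left_mem_uIcc).mono
      (hsub.trans (Ioc_subset_Icc_self.trans Icc_subset_uIcc))
  · intro p hp
    rw [hg p hp]
    exact (hasDerivAt_log_primitive hf hcont hpos
      ⟨hu.1.trans hp.1, hp.2⟩).hasDerivWithinAt

end LogPrimitive

theorem pgr_inversion_general
    (Q A₁ : ℝ → ℝ)
    (hpos : ∀ u ∈ Ioo (0:ℝ) 1, 0 < Q u)
    (hcont : ContinuousOn Q (Ioo (0:ℝ) 1))
    (hA₁ : ∀ u ∈ Ioo (0:ℝ) 1,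
      A₁ u = u - (1 / Q u) * ∫ p in (0:ℝ)..u, Q p)
    (hconv : ∀ u ∈ Ioo (0:ℝ) 1,
      IntervalIntegrable (fun p => (p - A₁ p)⁻¹) volume u 1)
    (hnorm : (∫ p in (0:ℝ)..1, Q p) = 1) :
    ∀ u ∈ Ioo (0:ℝ) 1,
      Q u = Real.exp (-∫ p in u..1, (p - A₁ p)⁻¹) / (u - A₁ u) := by
  intro u hu
  have hQ : IntervalIntegrable Q volume 0 1 :=
    intervalIntegral.intervalIntegrable_of_integral_ne_zero (by rw [hnorm]; exact one_ne_zero)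
  have hgap : ∀ p ∈ Ioo (0:ℝ) 1, p - A₁ p = (∫ t in (0:ℝ)..p, Q t) / Q p := by
    intro p hp
    rw [hA₁ p hp]
    field_simp [(hpos p hp).ne']
    ring
  have hlog := integral_eq_log_primitive_sub hQ hcont hpos hu (g := fun p => (p - A₁ p)⁻¹)
    (fun p hp => by rw [hgap p ⟨hu.1.trans hp.1, hp.2⟩, inv_div]) (hconv u hu)
  have hGu := intervalIntegral_pos_of_pos_on_Ioo hQ hpos (Ioo_subset_Ioc_self hu)
  rw [hlog, hnorm, Real.log_one, zero_sub, neg_neg, Real.exp_log hGu, hgap u hu]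
  field_simp [(hpos u hu).ne']

/-- the poverty gap ratio determines the quantile function via the
inversion formula. -/
theorem pgr_inversion
    (Q A₁ : ℝ → ℝ)
    (hpos : ∀ u ∈ Ioo (0:ℝ) 1, 0 < Q u)
    (hcont : ContinuousOn Q (Ioo (0:ℝ) 1))
    (hmono : StrictMonoOn Q (Ioo (0:ℝ) 1))
    (hint : ∀ u ∈ Ioo (0:ℝ) 1, IntervalIntegrable Q volume 0 u)
    (hA₁ : ∀ u ∈ Ioo (0:ℝ) 1,
      A₁ u = u - (1 / Q u) * ∫ p in (0:ℝ)..u, Q p)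
    (hconv : ∀ u ∈ Ioo (0:ℝ) 1,
      IntervalIntegrable (fun p => (p - A₁ p)⁻¹) volume u 1)
    (hnorm : (∫ p in (0:ℝ)..1, Q p) = 1) :
    ∀ u ∈ Ioo (0:ℝ) 1,
      Q u = Real.exp (-∫ p in u..1, (p - A₁ p)⁻¹) / (u - A₁ u) :=
  pgr_inversion_general Q A₁ hpos hcont hA₁ hconv hnorm
end

section
/- Let A₁(u) = u²/β for 0 ≤ u ≤ 1 with β > 1. Then the quantile function determined by A₁ through the inversion formula Q(u) = exp(-∫ᵤ¹ (p - A₁(p))⁻¹ dp)/(u - A₁(u)) is Q(u) = β(β-1)/(β-u)², and the corresponding distribution function is F(x) = β - (β(β-1)/x)^{1/2} on [(β-1)/β, β/(β-1)]. -/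
/-!
On `(0, β)` the integrand splits into partial fractions,
`(p - p²/β)⁻¹ = p⁻¹ + (β - p)⁻¹`, with primitive `log p - log (β - p)`. Hence
`exp (-∫ᵤ¹) = u (β - 1) / (β - u)`, and dividing by `u - u²/β = u (β - u) / β` gives
`Q u = β (β - 1) / (β - u)²`. This is increasing in `u`, so it maps `[0, 1]` into
`[(β - 1)/β, β/(β - 1)]`, and `√(β (β - 1) / Q u) = β - u` inverts it.
-/

open MeasureTheory Set

lemma inv_sub_sq_div_eq {β p : ℝ} (hp : 0 < p) (hpβ : p < β) :
    (p - p ^ 2 / β)⁻¹ = p⁻¹ + (β - p)⁻¹ := by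
  have : β - p ≠ 0 := by linarith
  have : β ≠ 0 := by linarith
  field_simp
  ring

lemma hasDerivAt_log_sub_log_sub {β p : ℝ} (hp : 0 < p) (hpβ : p < β) :
    HasDerivAt (fun p => Real.log p - Real.log (β - p)) (p - p ^ 2 / β)⁻¹ p := by
  rw [inv_sub_sq_div_eq hp hpβ, ← sub_neg_eq_add]
  have hsub : HasDerivAt (fun p => Real.log (β - p)) (-(β - p)⁻¹) p := by
    simpa [div_eq_inv_mul] using ((hasDerivAt_id' p).const_sub β).log (by linarith)
  exact (Real.hasDerivAt_log hp.ne').sub hsub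

lemma integral_inv_sub_sq_div {β a b : ℝ} (ha : 0 < a) (hb : 0 < b) (haβ : a < β) (hbβ : b < β) :
    ∫ p in a..b, (p - p ^ 2 / β)⁻¹ =
      (Real.log b - Real.log (β - b)) - (Real.log a - Real.log (β - a)) := by
  have hmem : ∀ p ∈ uIcc a b, 0 < p ∧ p < β := fun p hp =>
    ⟨lt_of_lt_of_le (lt_min ha hb) hp.1, lt_of_le_of_lt hp.2 (max_lt haβ hbβ)⟩
  refine intervalIntegral.integral_eq_sub_of_hasDerivAt
    (fun p hp => hasDerivAt_log_sub_log_sub (hmem p hp).1 (hmem p hp).2) ?_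
  refine ContinuousOn.intervalIntegrable fun p hp => ContinuousAt.continuousWithinAt ?_
  obtain ⟨hp, hpβ⟩ := hmem p hp
  have : p - p ^ 2 / β ≠ 0 := by
    rw [show p - p ^ 2 / β = p * (β - p) / β by field_simp [(hp.trans hpβ).ne']]
    exact (div_pos (mul_pos hp (sub_pos.2 hpβ)) (hp.trans hpβ)).ne'
  fun_prop (disch := assumption)

lemma exp_neg_integral_inv_sub_sq_div {β a b : ℝ} (ha : 0 < a) (hb : 0 < b) (haβ : a < β)
    (hbβ : b < β) :
    Real.exp (-∫ p in a..b, (p - p ^ 2 / β)⁻¹) = a * (β - b) / (b * (β - a)) := by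
  rw [integral_inv_sub_sq_div ha hb haβ hbβ, neg_sub]
  simp only [Real.exp_sub, Real.exp_log ha, Real.exp_log hb, Real.exp_log (sub_pos.2 haβ),
    Real.exp_log (sub_pos.2 hbβ)]
  field_simp

lemma quadratic_quantile_mem_Icc {β u : ℝ} (hβ : 1 < β) (hu : u ∈ Icc (0 : ℝ) 1) :
    β * (β - 1) / (β - u) ^ 2 ∈ Icc ((β - 1) / β) (β / (β - 1)) := by
  obtain ⟨hu0, hu1⟩ := hu
  have hβ0 : 0 < β := by linarith
  have hβ1 : 0 < β - 1 := by linarith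
  have hnum : 0 ≤ β * (β - 1) := by positivity
  constructor
  · calc (β - 1) / β = β * (β - 1) / β ^ 2 := by field_simp
      _ ≤ β * (β - 1) / (β - u) ^ 2 :=
        div_le_div_of_nonneg_left hnum (by nlinarith) (by nlinarith)
  · calc β * (β - 1) / (β - u) ^ 2 ≤ β * (β - 1) / (β - 1) ^ 2 :=
        div_le_div_of_nonneg_left hnum (by positivity) (by nlinarith)
      _ = β / (β - 1) := by field_simp

lemma sub_sqrt_div_quadratic_quantile {β u : ℝ} (hβ : 1 < β) (hu : u < β) :
    β - Real.sqrt (β * (β - 1) / (β * (β - 1) / (β - u) ^ 2)) = u := by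
  have : β * (β - 1) ≠ 0 := by nlinarith
  rw [div_div_cancel₀ this, Real.sqrt_sq (by linarith)]
  ring

/-- for A₁(u) = u²/β with β > 1, the inversion formula yields
Q(u) = β(β-1)/(β-u)², whose distribution function is F(x) = β - √(β(β-1)/x). -/
theorem pgr_quadratic_example
    (β : ℝ) (hβ : 1 < β)
    (A₁ Q F : ℝ → ℝ)
    (hA₁ : ∀ u ∈ Icc (0:ℝ) 1, A₁ u = u ^ 2 / β)
    (hQ : ∀ u ∈ Ioo (0:ℝ) 1,
      Q u = Real.exp (-∫ p in u..1, (p - A₁ p)⁻¹) / (u - A₁ u))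
    (hF : ∀ x ∈ Icc ((β - 1) / β) (β / (β - 1)),
      F x = β - Real.sqrt (β * (β - 1) / x)) :
    ∀ u ∈ Ioo (0:ℝ) 1,
      Q u = β * (β - 1) / (β - u) ^ 2 ∧
      Q u ∈ Icc ((β - 1) / β) (β / (β - 1)) ∧
      F (Q u) = u := by
  rintro u ⟨hu0, hu1⟩
  have hA₁_int : ∫ p in u..1, (p - A₁ p)⁻¹ = ∫ p in u..1, (p - p ^ 2 / β)⁻¹ := by
    refine intervalIntegral.integral_congr fun p hp => ?_
    rw [uIcc_of_le hu1.le] at hp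
    simp only [hA₁ p ⟨hu0.le.trans hp.1, hp.2⟩]
  have hQu : Q u = β * (β - 1) / (β - u) ^ 2 := by
    rw [hQ u ⟨hu0, hu1⟩, hA₁_int, hA₁ u ⟨hu0.le, hu1.le⟩,
      exp_neg_integral_inv_sub_sq_div hu0 one_pos (by linarith) hβ]
    have : β - u ≠ 0 := by linarith
    have : β ≠ 0 := by linarith
    field_simp
  have hmem := quadratic_quantile_mem_Icc hβ ⟨hu0.le, hu1.le⟩
  rw [← hQu] at hmem
  refine ⟨hQu, hmem, ?_⟩
  rw [hF _ hmem, hQu, sub_sqrt_div_quadratic_quantile hβ (by linarith)]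
end

section
/- If q(u) = k·u^α(1-u)^β with k > 0 and α, β > -2, then the poverty gap ratio is A₁(u) = B_u(α+2, β+1)/B_u(α+1, β+1), where B_u(a,b) = ∫₀ᵘ p^{a-1}(1-p)^{b-1} dp is the incomplete beta function. -/
open MeasureTheory Set

theorem intervalIntegral_eq_const_mul_of_eqOn_Ioo {f g : ℝ → ℝ} {u : ℝ} (c : ℝ) (hu : 0 ≤ u)
    (h : EqOn f (fun p => c * g p) (Ioo 0 u)) :
    ∫ p in (0:ℝ)..u, f p = c * ∫ p in (0:ℝ)..u, g p := by
  rw [← intervalIntegral.integral_const_mul]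
  exact intervalIntegral.integral_congr_Ioo_of_le hu h

theorem pgr_beta_quantile_density_general
    (k α β : ℝ) (hk : 0 < k)
    (q Q A₁ : ℝ → ℝ)
    (hq : ∀ u ∈ Ioo (0:ℝ) 1, q u = k * u ^ α * (1 - u) ^ β)
    (hQ : ∀ u ∈ Ioo (0:ℝ) 1, Q u = ∫ p in (0:ℝ)..u, q p)
    (hA₁ : ∀ u ∈ Ioo (0:ℝ) 1,
      A₁ u = (1 / Q u) * ∫ p in (0:ℝ)..u, p * q p)
    (B : ℝ → ℝ → ℝ → ℝ)
    (hB : ∀ u ∈ Ioo (0:ℝ) 1, ∀ a b : ℝ,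
      B u a b = ∫ p in (0:ℝ)..u, p ^ (a - 1) * (1 - p) ^ (b - 1)) :
    ∀ u ∈ Ioo (0:ℝ) 1,
      A₁ u = B u (α + 2) (β + 1) / B u (α + 1) (β + 1) := by
  intro u hu
  have hsub : Ioo 0 u ⊆ Ioo 0 1 := Ioo_subset_Ioo_right hu.2.le
  have hQu : Q u = k * B u (α + 1) (β + 1) := by
    rw [hQ u hu, hB u hu]
    refine intervalIntegral_eq_const_mul_of_eqOn_Ioo k hu.1.le fun p hp => ?_
    simp only [hq p (hsub hp), add_sub_cancel_right]
    ring
  have hNum : ∫ p in (0:ℝ)..u, p * q p = k * B u (α + 2) (β + 1) := by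
    rw [hB u hu]
    refine intervalIntegral_eq_const_mul_of_eqOn_Ioo k hu.1.le fun p hp => ?_
    simp only [hq p (hsub hp), add_sub_cancel_right, show α + 2 - 1 = α + 1 by ring,
      Real.rpow_add_one hp.1.ne']
    ring
  rw [hA₁ u hu, hQu, hNum, one_div_mul_eq_div, mul_div_mul_left _ _ hk.ne']

/-- for q(u) = k u^α (1-u)^β, A₁(u) = B_u(α+2,β+1)/B_u(α+1,β+1). -/
theorem pgr_beta_quantile_density
    (k α β : ℝ) (hk : 0 < k) (hα : -2 < α) (hβ : -2 < β)
    (q Q A₁ : ℝ → ℝ)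
    (hq : ∀ u ∈ Ioo (0:ℝ) 1, q u = k * u ^ α * (1 - u) ^ β)
    (hQ : ∀ u ∈ Ioo (0:ℝ) 1, Q u = ∫ p in (0:ℝ)..u, q p)
    (hA₁ : ∀ u ∈ Ioo (0:ℝ) 1,
      A₁ u = (1 / Q u) * ∫ p in (0:ℝ)..u, p * q p)
    (B : ℝ → ℝ → ℝ → ℝ)
    (hB : ∀ u ∈ Ioo (0:ℝ) 1, ∀ a b : ℝ,
      B u a b = ∫ p in (0:ℝ)..u, p ^ (a - 1) * (1 - p) ^ (b - 1)) :
    ∀ u ∈ Ioo (0:ℝ) 1,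
      A₁ u = B u (α + 2) (β + 1) / B u (α + 1) (β + 1) :=
  pgr_beta_quantile_density_general k α β hk q Q A₁ hq hQ hA₁ B hB
end

section
/- Let F be a continuous distribution function on [0,∞) with F(0)=0 and let A₁(t) = (1/t)∫₀ᵗ F(x) dx and A₂(t) = ∫₀ᵗ (1 - x/t)² dF(x). Then A₂(t) = (2/t²) ∫₀ᵗ x·A₁(x) dx. -/
open MeasureTheory Set

/- Write G x = ∫₀ˣ F, so that x A₁(x) = G x, and K x = ∫₀ˣ G. The function
(t - x)² F x + 2 (t - x) G x + 2 K x has derivative (t - x)² F'(x), so by the fundamental theorem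
of calculus t² A₂(t) = ∫₀ᵗ (t - x)² dF(x) = 2 K t - t² F 0 = 2 ∫₀ᵗ x A₁(x) dx. -/

theorem integral_sub_sq_mul_deriv_eq {F f : ℝ → ℝ} {a b : ℝ} (hF : ∀ x, HasDerivAt F (f x) x)
    (hf : IntervalIntegrable f volume a b) :
    ∫ x in a..b, (b - x) ^ 2 * f x = 2 * (∫ x in a..b, ∫ y in a..x, F y) - (b - a) ^ 2 * F a := by
  set G : ℝ → ℝ := fun x => ∫ y in a..x, F y
  set K : ℝ → ℝ := fun x => ∫ y in a..x, G y
  have hFc : Continuous F := continuous_iff_continuousAt.2 fun x => (hF x).continuousAt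
  have hG : ∀ x, HasDerivAt G (F x) x := fun x => (hFc.integral_hasStrictDerivAt a x).hasDerivAt
  have hGc : Continuous G := continuous_iff_continuousAt.2 fun x => (hG x).continuousAt
  have hK : ∀ x, HasDerivAt K (G x) x := fun x => (hGc.integral_hasStrictDerivAt a x).hasDerivAt
  have hψ : ∀ x ∈ uIcc a b, HasDerivAt (fun x => (b - x) ^ 2 * F x + 2 * (b - x) * G x + 2 * K x)
      ((b - x) ^ 2 * f x) x := by
    intro x _
    have hsub : HasDerivAt (fun x => b - x) (-1) x := by
      simpa using (hasDerivAt_id x).const_sub b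
    refine ((((hsub.fun_pow 2).mul (hF x)).add ((hsub.const_mul 2).mul (hG x))).add
      ((hK x).const_mul 2)).congr_deriv ?_
    ring
  have hint : IntervalIntegrable (fun x => (b - x) ^ 2 * f x) volume a b :=
    hf.continuousOn_mul (by fun_prop)
  rw [intervalIntegral.integral_eq_sub_of_hasDerivAt hψ hint]
  simp [G, K]

theorem integral_mul_eq_of_eq_inv_mul {A g : ℝ → ℝ} {t : ℝ} (ht : 0 ≤ t)
    (hA : ∀ x > 0, A x = (1 / x) * g x) :
    ∫ x in 0..t, x * A x = ∫ x in 0..t, g x := by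
  refine intervalIntegral.integral_congr_ae (Filter.Eventually.of_forall fun x hx => ?_)
  rw [uIoc_of_le ht] at hx
  rw [hA x hx.1]
  field_simp [hx.1.ne']

theorem fgt2_from_pgr_general
    (F f A₁ A₂ : ℝ → ℝ)
    (hF0 : F 0 = 0)
    (hderiv : ∀ x, HasDerivAt F (f x) x)
    (hfint : ∀ t : ℝ, IntervalIntegrable f volume 0 t)
    (hA₁ : ∀ t > (0:ℝ), A₁ t = (1 / t) * ∫ x in (0:ℝ)..t, F x)
    (hA₂ : ∀ t > (0:ℝ), A₂ t = ∫ x in (0:ℝ)..t, (1 - x / t) ^ 2 * f x) :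
    ∀ t > (0:ℝ), A₂ t = (2 / t ^ 2) * ∫ x in (0:ℝ)..t, x * A₁ x := by
  intro t ht
  have hscale : ∫ x in (0:ℝ)..t, (1 - x / t) ^ 2 * f x
      = (1 / t ^ 2) * ∫ x in (0:ℝ)..t, (t - x) ^ 2 * f x := by
    rw [← intervalIntegral.integral_const_mul]
    refine intervalIntegral.integral_congr fun x _ => ?_
    field_simp
  rw [hA₂ t ht, hscale, integral_sub_sq_mul_deriv_eq hderiv (hfint t),
    integral_mul_eq_of_eq_inv_mul ht.le hA₁, hF0]
  ring

/-- A₂(t) = (2/t²) ∫₀ᵗ x·A₁(x) dx. -/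
theorem fgt2_from_pgr
    (F f A₁ A₂ : ℝ → ℝ)
    (hcont : Continuous F)
    (hF0 : F 0 = 0)
    (hderiv : ∀ x, HasDerivAt F (f x) x)
    (hfint : ∀ t : ℝ, IntervalIntegrable f volume 0 t)
    (hA₁ : ∀ t > (0:ℝ), A₁ t = (1 / t) * ∫ x in (0:ℝ)..t, F x)
    (hA₂ : ∀ t > (0:ℝ), A₂ t = ∫ x in (0:ℝ)..t, (1 - x / t) ^ 2 * f x) :
    ∀ t > (0:ℝ), A₂ t = (2 / t ^ 2) * ∫ x in (0:ℝ)..t, x * A₁ x :=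
  fgt2_from_pgr_general F f A₁ A₂ hF0 hderiv hfint hA₁ hA₂
end

section
/- Let Q : (0,1) → (0,∞) be a continuously differentiable, strictly increasing quantile function with Q(u) = α u^{1/β} for some α, β > 0 if and only if the Watts measure W(u) = u log Q(u) - ∫₀ᵘ log Q(p) dp equals u/β for all u ∈ (0,1). -/
/-!
Writing `F u = ∫₀ᵘ log Q`, the identity `W u = u / β` says `log Q u = 1 / β + F u / u`. The right
side is continuous, so the fundamental theorem of calculus gives `F' = log Q`, and then
`(F u / u)' = (u log Q u - F u) / u² = 1 / (β u)`. Hence `log Q u = k + (1 / β) log u`. The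
converse is the computation `∫₀ᵘ log p dp = u log u - u`.
-/

open MeasureTheory Set Real
open scoped Interval

lemma integral_log_const_mul_rpow {α : ℝ} (hα : 0 < α) (r : ℝ) {u : ℝ} (hu : 0 ≤ u) :
    ∫ p in (0:ℝ)..u, log (α * p ^ r) = u * log α + r * (u * log u - u) := by
  have hlog : ∀ p ∈ Ι (0:ℝ) u, log (α * p ^ r) = log α + r * log p := fun p hp => by
    have hp : 0 < p := (uIoc_of_le hu ▸ hp).1
    rw [log_mul hα.ne' (rpow_pos_of_pos hp r).ne', log_rpow hp]
  rw [intervalIntegral.integral_congr_ae (Filter.Eventually.of_forall hlog),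
    intervalIntegral.integral_add intervalIntegrable_const
      (intervalIntegral.intervalIntegrable_log'.const_mul r),
    intervalIntegral.integral_const_mul, intervalIntegral.integral_const, integral_log]
  simp

lemma continuousOn_primitive_Ioo {E : Type*} [NormedAddCommGroup E] [NormedSpace ℝ E]
    {g : ℝ → E} {a b : ℝ} (hg : ∀ u ∈ Ioo a b, IntervalIntegrable g volume a u) :
    ContinuousOn (fun u => ∫ p in a..u, g p) (Ioo a b) := by
  intro u hu
  obtain ⟨v, huv, hvb⟩ := exists_between hu.2
  have hav : a ≤ v := hu.1.le.trans huv.le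
  have hcont :=
    intervalIntegral.continuousOn_primitive_interval' (hg v ⟨hu.1.trans huv, hvb⟩) left_mem_uIcc
  rw [uIcc_of_le hav] at hcont
  exact (hcont.continuousAt (Icc_mem_nhds hu.1 huv)).continuousWithinAt

section MulSubIntegral

variable {g : ℝ → ℝ} {b c : ℝ}
  (hg : ∀ u ∈ Ioo 0 b, IntervalIntegrable g volume 0 u)
  (h : ∀ u ∈ Ioo 0 b, u * g u - ∫ p in (0:ℝ)..u, g p = c * u)
include hg h

lemma continuousOn_of_mul_sub_integral_eq : ContinuousOn g (Ioo 0 b) := by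
  have hg_eq : EqOn g (fun u => c + (∫ p in (0:ℝ)..u, g p) / u) (Ioo 0 b) := fun u hu => by
    have := h u hu
    have hu0 := hu.1.ne'
    dsimp only
    field_simp
    linarith
  refine ContinuousOn.congr ?_ hg_eq
  exact continuousOn_const.add <|
    (continuousOn_primitive_Ioo hg).div continuousOn_id fun u hu => hu.1.ne'

lemma hasDerivAt_integral_div_of_mul_sub_integral_eq {u : ℝ} (hu : u ∈ Ioo 0 b) :
    HasDerivAt (fun v => (∫ p in (0:ℝ)..v, g p) / v) (c * u⁻¹) u := by
  have hcont := continuousOn_of_mul_sub_integral_eq hg h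
  have hF : HasDerivAt (fun v => ∫ p in (0:ℝ)..v, g p) (g u) u :=
    intervalIntegral.integral_hasDerivAt_right (hg u hu)
      (hcont.stronglyMeasurableAtFilter isOpen_Ioo u hu) (hcont.continuousAt (isOpen_Ioo.mem_nhds hu))
  refine (hF.fun_div (hasDerivAt_id' u) hu.1.ne').congr_deriv ?_
  have := h u hu
  have hu0 := hu.1.ne'
  field_simp
  linarith

lemma exists_eq_add_mul_log_of_mul_sub_integral_eq :
    ∃ k, ∀ u ∈ Ioo 0 b, g u = k + c * log u := by
  have hderiv : ∀ u ∈ Ioo 0 b, HasDerivAt (fun v => (∫ p in (0:ℝ)..v, g p) / v) (c * u⁻¹) u :=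
    fun _ hu => hasDerivAt_integral_div_of_mul_sub_integral_eq hg h hu
  have hlog : ∀ u ∈ Ioo 0 b, HasDerivAt (fun v => c * log v) (c * u⁻¹) u := fun u hu =>
    (hasDerivAt_log hu.1.ne').const_mul c
  obtain ⟨k, hk⟩ := isOpen_Ioo.exists_eq_add_of_deriv_eq isPreconnected_Ioo
    (fun u hu => (hderiv u hu).differentiableAt.differentiableWithinAt)
    (fun u hu => (hlog u hu).differentiableAt.differentiableWithinAt)
    (fun u hu => (hderiv u hu).deriv.trans (hlog u hu).deriv.symm)
  refine ⟨c + k, fun u hu => ?_⟩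
  have hku := hk hu
  have := h u hu
  simp only at hku
  field_simp [hu.1.ne'] at hku
  refine mul_left_cancel₀ hu.1.ne' ?_
  linarith

end MulSubIntegral

theorem watts_characterizes_power_general
    (Q W : ℝ → ℝ) (β : ℝ)
    (hpos : ∀ u ∈ Ioo (0:ℝ) 1, 0 < Q u)
    (hlogint : ∀ u ∈ Ioo (0:ℝ) 1,
      IntervalIntegrable (fun p => Real.log (Q p)) volume 0 u)
    (hW : ∀ u ∈ Ioo (0:ℝ) 1,
      W u = u * Real.log (Q u) - ∫ p in (0:ℝ)..u, Real.log (Q p)) :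
    (∃ α > (0:ℝ), ∀ u ∈ Ioo (0:ℝ) 1, Q u = α * u ^ (1 / β)) ↔
      (∀ u ∈ Ioo (0:ℝ) 1, W u = u / β) := by
  constructor
  · rintro ⟨α, hα, hQ⟩ u hu
    have hintegral : ∫ p in (0:ℝ)..u, log (Q p) = ∫ p in (0:ℝ)..u, log (α * p ^ (1 / β)) :=
      intervalIntegral.integral_congr_ae <| Filter.Eventually.of_forall fun p hp => by
        rw [uIoc_of_le hu.1.le] at hp
        rw [hQ p ⟨hp.1, hp.2.trans_lt hu.2⟩]
    rw [hW u hu, hintegral, integral_log_const_mul_rpow hα _ hu.1.le, hQ u hu,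
      log_mul hα.ne' (rpow_pos_of_pos hu.1 _).ne', log_rpow hu.1]
    ring
  · intro hWu
    obtain ⟨k, hk⟩ := exists_eq_add_mul_log_of_mul_sub_integral_eq hlogint
      (c := 1 / β) fun u hu => by rw [← hW u hu, hWu u hu]; ring
    refine ⟨exp k, exp_pos k, fun u hu => ?_⟩
    rw [← exp_log (hpos u hu), hk u hu, exp_add, rpow_def_of_pos hu.1, mul_comm (log u)]

/-- the Watts measure is W(u) = u/β iff Q is the power quantile
function Q(u) = α u^{1/β}. -/
theorem watts_characterizes_power
    (Q W : ℝ → ℝ) (β : ℝ) (hβ : 0 < β)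
    (hpos : ∀ u ∈ Ioo (0:ℝ) 1, 0 < Q u)
    (hdiff : ∀ u ∈ Ioo (0:ℝ) 1, DifferentiableAt ℝ Q u)
    (hcontderiv : ContinuousOn (deriv Q) (Ioo (0:ℝ) 1))
    (hmono : StrictMonoOn Q (Ioo (0:ℝ) 1))
    (hlogint : ∀ u ∈ Ioo (0:ℝ) 1,
      IntervalIntegrable (fun p => Real.log (Q p)) volume 0 u)
    (hW : ∀ u ∈ Ioo (0:ℝ) 1,
      W u = u * Real.log (Q u) - ∫ p in (0:ℝ)..u, Real.log (Q p)) :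
    (∃ α > (0:ℝ), ∀ u ∈ Ioo (0:ℝ) 1, Q u = α * u ^ (1 / β)) ↔
      (∀ u ∈ Ioo (0:ℝ) 1, W u = u / β) :=
  watts_characterizes_power_general Q W β hpos hlogint hW
end

section
/- Let Q be a positive continuous quantile function on (0,1). The Gini index of the poor G_Q(u) = 1 - (2/(u∫₀ᵘ Q(p)dp))∫₀ᵘ (u-p)Q(p) dp is constant in u if and only if Q(u) = α u^{1/β} for some constants α > 0, β > 0 (power distribution), in which case G_Q(u) = 1/(1+2β). -/
/-!
Write `F u = ∫₀ᵘ Q` and `J u = ∫₀ᵘ p Q(p) dp`. Since `∫₀ᵘ (u - p) Q = u F - J`, the Gini index of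
the poor equals `c` exactly when `2 J(u) = (1 + c) u F(u)`. Differentiating once (`J' = u Q`,
`F' = Q`) gives the Euler equation `u F' = r F` with `r = (1 + c)/(1 - c)`, so `F = C u ^ r` and
`Q = r C u ^ (r - 1)`; monotonicity forces `r > 1`, and `β = 1/(r - 1)` satisfies `c = 1/(1 + 2β)`.
-/

open MeasureTheory Set Filter

theorem HasDerivAt.eq_of_eqOn {f g : ℝ → ℝ} {s : Set ℝ} {x f' g' : ℝ} (hs : IsOpen s)
    (hfg : EqOn f g s) (hx : x ∈ s) (hf : HasDerivAt f f' x) (hg : HasDerivAt g g' x) :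
    f' = g' :=
  hf.unique (hg.congr_of_eventuallyEq (eventuallyEq_of_mem (hs.mem_nhds hx) hfg))

theorem IsOpen.exists_eqOn_mul_rpow_of_hasDerivAt {s : Set ℝ} (hs : IsOpen s)
    (hs' : IsPreconnected s) (hs0 : s ⊆ Ioi 0) {f f' : ℝ → ℝ} {r : ℝ}
    (hf : ∀ x ∈ s, HasDerivAt f (f' x) x) (hode : ∀ x ∈ s, x * f' x = r * f x) :
    ∃ C, EqOn f (fun x => C * x ^ r) s := by
  have hg : ∀ x ∈ s, HasDerivAt (fun x => f x * x ^ (-r)) 0 x := by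
    intro x hx
    have hx0 : 0 < x := hs0 hx
    refine ((hf x hx).mul (Real.hasDerivAt_rpow_const (p := -r) (Or.inl hx0.ne'))).congr_deriv ?_
    rw [Real.rpow_sub hx0, Real.rpow_one]
    field_simp
    linear_combination (x ^ (-r)) * hode x hx
  obtain ⟨C, hC⟩ := hs.exists_is_const_of_deriv_eq_zero hs'
    (fun x hx => (hg x hx).differentiableAt.differentiableWithinAt) (fun x hx => (hg x hx).deriv)
  refine ⟨C, fun x hx => ?_⟩
  show f x = C * x ^ r
  rw [← hC x hx, mul_assoc, ← Real.rpow_add (hs0 hx)]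
  simp

theorem integral_sub_mul_eq {Q : ℝ → ℝ} {a b : ℝ} (hQ : IntervalIntegrable Q volume a b) (u : ℝ) :
    ∫ p in a..b, (u - p) * Q p = u * (∫ p in a..b, Q p) - ∫ p in a..b, p * Q p := by
  simp only [sub_mul]
  rw [intervalIntegral.integral_sub (hQ.const_mul u)
      (hQ.continuousOn_mul (g := fun p => p) continuousOn_id),
    intervalIntegral.integral_const_mul]

theorem pos_of_strictMonoOn_mul_rpow {α γ : ℝ} (hα : 0 < α)
    (hmono : StrictMonoOn (fun u => α * u ^ γ) (Ioo 0 1)) : 0 < γ := by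
  by_contra! h
  have hlt := hmono (a := 1/4) (b := 1/2) (by norm_num) (by norm_num) (by norm_num)
  have hle : (1/2:ℝ) ^ γ ≤ (1/4:ℝ) ^ γ := Real.rpow_le_rpow_of_nonpos (by norm_num) (by norm_num) h
  have := mul_le_mul_of_nonneg_left hle hα.le
  simp only at hlt
  linarith

theorem hasDerivAt_integral_of_continuousOn {f : ℝ → ℝ} {s : Set ℝ} {a u : ℝ} (hs : IsOpen s)
    (hf : ContinuousOn f s) (hint : IntervalIntegrable f volume a u) (hu : u ∈ s) :
    HasDerivAt (fun x => ∫ p in a..x, f p) (f u) u :=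
  intervalIntegral.integral_hasDerivAt_right hint (hf.stronglyMeasurableAtFilter hs u hu)
    (hf.continuousAt (hs.mem_nhds hu))

section GiniPoor

variable {Q : ℝ → ℝ} {c : ℝ}

theorem integral_pos_of_pos_on_Ioo (hpos : ∀ u ∈ Ioo (0:ℝ) 1, 0 < Q u) {u : ℝ}
    (hu : u ∈ Ioo (0:ℝ) 1) (hint : IntervalIntegrable Q volume 0 u) :
    0 < ∫ p in (0:ℝ)..u, Q p :=
  intervalIntegral.intervalIntegral_pos_of_pos_on hint
    (fun x hx => hpos x ⟨hx.1, hx.2.trans hu.2⟩) hu.1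

theorem mul_quantile_eq_of_gini_poor_eq (hpos : ∀ u ∈ Ioo (0:ℝ) 1, 0 < Q u)
    (hcont : ContinuousOn Q (Ioo 0 1))
    (hint : ∀ u ∈ Ioo (0:ℝ) 1, IntervalIntegrable Q volume 0 u)
    (hc : ∀ u ∈ Ioo (0:ℝ) 1,
      1 - (2 / (u * ∫ p in (0:ℝ)..u, Q p)) * ∫ p in (0:ℝ)..u, (u - p) * Q p = c) :
    ∀ u ∈ Ioo (0:ℝ) 1, (1 - c) * (u * Q u) = (1 + c) * ∫ p in (0:ℝ)..u, Q p := by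
  have hJ : EqOn (fun u => 2 * ∫ p in (0:ℝ)..u, p * Q p)
      (fun u => (1 + c) * (u * ∫ p in (0:ℝ)..u, Q p)) (Ioo 0 1) := by
    intro u hu
    have hc := hc u hu
    rw [integral_sub_mul_eq (hint u hu)] at hc
    have hF_pos := integral_pos_of_pos_on_Ioo hpos hu (hint u hu)
    have hu0 : u ≠ 0 := hu.1.ne'
    field_simp at hc
    linear_combination hc
  intro u hu
  have hFd := hasDerivAt_integral_of_continuousOn isOpen_Ioo hcont (hint u hu) hu
  have hJd := hasDerivAt_integral_of_continuousOn (f := fun p => p * Q p) isOpen_Ioo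
    (continuousOn_id.mul hcont) ((hint u hu).continuousOn_mul (g := fun p => p) continuousOn_id) hu
  have := HasDerivAt.eq_of_eqOn isOpen_Ioo hJ hu (hJd.const_mul 2)
    (((hasDerivAt_id u).mul hFd).const_mul (1 + c))
  simp only [id] at this
  linarith

theorem exists_power_of_mul_quantile_eq (hpos : ∀ u ∈ Ioo (0:ℝ) 1, 0 < Q u)
    (hcont : ContinuousOn Q (Ioo 0 1)) (hmono : StrictMonoOn Q (Ioo 0 1))
    (hint : ∀ u ∈ Ioo (0:ℝ) 1, IntervalIntegrable Q volume 0 u)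
    (hode : ∀ u ∈ Ioo (0:ℝ) 1, (1 - c) * (u * Q u) = (1 + c) * ∫ p in (0:ℝ)..u, Q p) :
    ∃ α > (0:ℝ), ∃ β > (0:ℝ), (∀ u ∈ Ioo (0:ℝ) 1, Q u = α * u ^ (1 / β)) ∧
      c = 1 / (1 + 2 * β) := by
  have h12 : (1/2 : ℝ) ∈ Ioo (0:ℝ) 1 := by norm_num
  -- At `u = 1/2` both `u Q u` and `∫₀ᵘ Q` are positive, so `1 - c` and `1 + c` have the same sign.
  obtain ⟨hc_gt, hc_lt⟩ : -1 < c ∧ c < 1 := by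
    have hF_pos := integral_pos_of_pos_on_Ioo hpos h12 (hint _ h12)
    have hQ_pos := hpos _ h12
    have h := hode _ h12
    constructor <;> nlinarith
  have hc1 : 1 - c ≠ 0 := by linarith
  obtain ⟨r, hr⟩ : ∃ r, r = (1 + c) / (1 - c) := ⟨_, rfl⟩
  have hode' : ∀ u ∈ Ioo (0:ℝ) 1, u * Q u = r * ∫ p in (0:ℝ)..u, Q p := fun u hu => by
    rw [hr, div_mul_eq_mul_div, ← hode u hu]
    field_simp
  obtain ⟨C, hC⟩ := isOpen_Ioo.exists_eqOn_mul_rpow_of_hasDerivAt isPreconnected_Ioo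
    Ioo_subset_Ioi_self
    (fun u hu => hasDerivAt_integral_of_continuousOn isOpen_Ioo hcont (hint u hu) hu) hode'
  have hQ : EqOn Q (fun u => (r * C) * u ^ (r - 1)) (Ioo 0 1) := by
    intro u hu
    have hCu : ∫ p in (0:ℝ)..u, Q p = C * u ^ r := hC hu
    have h := hode' u hu
    rw [hCu] at h
    show Q u = r * C * u ^ (r - 1)
    have hu0 : u ≠ 0 := hu.1.ne'
    rw [Real.rpow_sub_one hu0]
    field_simp
    linear_combination h
  have hα : 0 < r * C := pos_of_mul_pos_left (hQ h12 ▸ hpos _ h12) (by positivity)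
  have hγ : 0 < r - 1 := pos_of_strictMonoOn_mul_rpow hα (hmono.congr hQ)
  refine ⟨r * C, hα, 1 / (r - 1), by positivity, fun u hu => by rw [one_div_one_div, hQ hu], ?_⟩
  have hr1 : r - 1 = 2 * c / (1 - c) := by
    rw [hr]
    field_simp
    ring
  have hc0 : c ≠ 0 := by
    rintro rfl
    norm_num [hr1] at hγ
  rw [hr1]
  field_simp
  ring

end GiniPoor

theorem gini_poor_constant_iff_power_general
    (Q GQ : ℝ → ℝ)
    (hpos : ∀ u ∈ Ioo (0:ℝ) 1, 0 < Q u)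
    (hdiff : ∀ u ∈ Ioo (0:ℝ) 1, DifferentiableAt ℝ Q u)
    (hmono : StrictMonoOn Q (Ioo (0:ℝ) 1))
    (hint : ∀ u ∈ Ioo (0:ℝ) 1, IntervalIntegrable Q volume 0 u)
    (hG : ∀ u ∈ Ioo (0:ℝ) 1,
      GQ u = 1 - (2 / (u * ∫ p in (0:ℝ)..u, Q p)) *
        ∫ p in (0:ℝ)..u, (u - p) * Q p) :
    (∃ c : ℝ, ∀ u ∈ Ioo (0:ℝ) 1, GQ u = c) ↔
      (∃ α > (0:ℝ), ∃ β > (0:ℝ),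
        (∀ u ∈ Ioo (0:ℝ) 1, Q u = α * u ^ (1 / β)) ∧
        (∀ u ∈ Ioo (0:ℝ) 1, GQ u = 1 / (1 + 2 * β))) := by
  constructor
  · rintro ⟨c, hc⟩
    have hcont : ContinuousOn Q (Ioo 0 1) := fun u hu =>
      (hdiff u hu).continuousAt.continuousWithinAt
    have hode := mul_quantile_eq_of_gini_poor_eq hpos hcont hint fun u hu =>
      (hG u hu).symm.trans (hc u hu)
    obtain ⟨α, hα, β, hβ, hQ, rfl⟩ := exists_power_of_mul_quantile_eq hpos hcont hmono hint hode
    exact ⟨α, hα, β, hβ, hQ, hc⟩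
  · rintro ⟨α, -, β, -, -, hGQ⟩
    exact ⟨_, hGQ⟩

/-- the Gini index of the poor is constant in u iff Q is a power
quantile function, in which case G_Q(u) = 1/(1+2β). -/
theorem gini_poor_constant_iff_power
    (Q GQ : ℝ → ℝ)
    (hpos : ∀ u ∈ Ioo (0:ℝ) 1, 0 < Q u)
    (hdiff : ∀ u ∈ Ioo (0:ℝ) 1, DifferentiableAt ℝ Q u)
    (hcontderiv : ContinuousOn (deriv Q) (Ioo (0:ℝ) 1))
    (hmono : StrictMonoOn Q (Ioo (0:ℝ) 1))
    (hint : ∀ u ∈ Ioo (0:ℝ) 1, IntervalIntegrable Q volume 0 u)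
    (hG : ∀ u ∈ Ioo (0:ℝ) 1,
      GQ u = 1 - (2 / (u * ∫ p in (0:ℝ)..u, Q p)) *
        ∫ p in (0:ℝ)..u, (u - p) * Q p) :
    (∃ c : ℝ, ∀ u ∈ Ioo (0:ℝ) 1, GQ u = c) ↔
      (∃ α > (0:ℝ), ∃ β > (0:ℝ),
        (∀ u ∈ Ioo (0:ℝ) 1, Q u = α * u ^ (1 / β)) ∧
        (∀ u ∈ Ioo (0:ℝ) 1, GQ u = 1 / (1 + 2 * β))) :=
  gini_poor_constant_iff_power_general Q GQ hpos hdiff hmono hint hG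
end
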